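/- Let F, g_1, …, g_m : ℝⁿ → ℝ be convex and differentiable, let t > 0, and suppose x̄ ∈ ℝⁿ satisfies g_i(x̄) < 0 for all i and the barrier stationarity condition t ∇F(x̄) + Σ_{i=1}^m (−1/g_i(x̄)) ∇g_i(x̄) = 0. Then for every x ∈ ℝⁿ with g_i(x) ≤ 0 for all i, one has F(x̄) ≤ F(x) + m/t; i.e., the central-path point x̄ is at most m/t-suboptimal for the inequality-constrained problem of minimizing F subject to g_i(x) ≤ 0, i = 1,…,m. -/

import Mathlib

/-!
With multipliers `μᵢ = -1/gᵢ(x̄) > 0`, the stationarity condition says that `x̄` is a critical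
point, hence a global minimiser, of the convex Lagrangian `L = t F + ∑ᵢ μᵢ gᵢ`. Complementary
slackness fails by exactly `μᵢ gᵢ(x̄) = -1` per constraint, so weak duality gives
`t F(x̄) - m = L(x̄) ≤ L(x) ≤ t F(x)` for every feasible `x`.
-/

open Set

theorem ConvexOn.sum {𝕜 E β ι : Type*} [Semiring 𝕜] [PartialOrder 𝕜] [AddCommMonoid E]
    [AddCommMonoid β] [PartialOrder β] [IsOrderedAddMonoid β] [SMul 𝕜 E] [Module 𝕜 β]
    {s : Set E} (hs : Convex 𝕜 s) {f : ι → E → β} (u : Finset ι)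
    (hf : ∀ i ∈ u, ConvexOn 𝕜 s (f i)) : ConvexOn 𝕜 s (fun x ↦ ∑ i ∈ u, f i x) :=
  Finset.sum_fn u f ▸
    Finset.sum_induction f (ConvexOn 𝕜 s) (fun _ _ ↦ ConvexOn.add) (convexOn_const (0 : β) hs) hf

section FirstOrder

variable {E : Type*} [NormedAddCommGroup E] [NormedSpace ℝ E] {s : Set E} {f : E → ℝ}
  {f' : StrongDual ℝ E} {x y : E}

theorem ConvexOn.add_fderiv_sub_le (hf : ConvexOn ℝ s f) (hx : x ∈ s) (hy : y ∈ s)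
    (hf' : HasFDerivAt f f' x) : f x + f' (y - x) ≤ f y := by
  have hline : ConvexOn ℝ (AffineMap.lineMap x y ⁻¹' s) (f ∘ AffineMap.lineMap (k := ℝ) x y) :=
    hf.comp_affineMap _
  have hderiv : HasDerivAt (f ∘ AffineMap.lineMap (k := ℝ) x y) (f' (y - x)) 0 :=
    hf'.comp_hasDerivAt_of_eq 0 AffineMap.hasDerivAt_lineMap (AffineMap.lineMap_apply_zero x y).symm
  have := hline.le_slope_of_hasDerivAt (by simpa using hx) (by simpa using hy) one_pos hderiv
  simp only [slope_def_field, Function.comp_apply, AffineMap.lineMap_apply_one,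
    AffineMap.lineMap_apply_zero, sub_zero, div_one] at this
  linarith

theorem ConvexOn.isMinOn_of_hasFDerivAt_eq_zero (hf : ConvexOn ℝ s f) (hx : x ∈ s)
    (hf' : HasFDerivAt f (0 : StrongDual ℝ E) x) : IsMinOn f s x := fun y hy ↦ by
  simpa using hf.add_fderiv_sub_le hx hy hf'

end FirstOrder

theorem le_of_isMinOn_lagrangian {α ι : Type*} [Fintype ι] {f : α → ℝ} {g : ι → α → ℝ}
    {μ : ι → ℝ} (hμ : ∀ i, 0 ≤ μ i) {xbar : α}
    (hmin : IsMinOn (fun y ↦ f y + ∑ i, μ i * g i y) univ xbar)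
    {x : α} (hx : ∀ i, g i x ≤ 0) : f xbar + ∑ i, μ i * g i xbar ≤ f x := by
  have hslack : ∑ i, μ i * g i x ≤ 0 :=
    Finset.sum_nonpos fun i _ ↦ mul_nonpos_of_nonneg_of_nonpos (hμ i) (hx i)
  have := hmin (mem_univ x)
  simp only [mem_ofPred_eq] at this
  linarith

/-- Suboptimality of central-path points: if `x̄` is strictly feasible and satisfies the
barrier stationarity condition `t∇F(x̄) + Σᵢ (−1/gᵢ(x̄))∇gᵢ(x̄) = 0` with `t > 0`, then
`F(x̄) ≤ F(x) + m/t` for every feasible `x` (i.e. `x̄` is at most `m/t`-suboptimal for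
minimizing `F` subject to `gᵢ(x) ≤ 0`). -/
theorem central_path_suboptimality (n m : ℕ)
    (F : EuclideanSpace ℝ (Fin n) → ℝ)
    (g : Fin m → EuclideanSpace ℝ (Fin n) → ℝ)
    (hF : ConvexOn ℝ Set.univ F) (hFd : Differentiable ℝ F)
    (hg : ∀ i, ConvexOn ℝ Set.univ (g i)) (hgd : ∀ i, Differentiable ℝ (g i))
    (t : ℝ) (ht : 0 < t) (xbar : EuclideanSpace ℝ (Fin n))
    (hfeas : ∀ i, g i xbar < 0)
    (hstat : t • gradient F xbar +
      ∑ i : Fin m, (-(1 / g i xbar)) • gradient (g i) xbar = 0) :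
    ∀ x : EuclideanSpace ℝ (Fin n), (∀ i, g i x ≤ 0) → F xbar ≤ F x + (m : ℝ) / t := by
  intro x hx
  set μ : Fin m → ℝ := fun i ↦ -(1 / g i xbar)
  have hμ : ∀ i, 0 ≤ μ i := fun i ↦ by simpa [μ] using (hfeas i).le
  have hconv : ConvexOn ℝ univ (fun y ↦ t * F y + ∑ i, μ i * g i y) :=
    (hF.smul ht.le).add (ConvexOn.sum convex_univ _ fun i _ ↦ (hg i).smul (hμ i))
  have hcrit : HasFDerivAt (fun y ↦ t * F y + ∑ i, μ i * g i y)
      (0 : StrongDual ℝ (EuclideanSpace ℝ (Fin n))) xbar := by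
    have hfderiv : t • fderiv ℝ F xbar + ∑ i, μ i • fderiv ℝ (g i) xbar = 0 := by
      simpa only [map_add, map_sum, map_smulₛₗ, toDual_gradient, map_zero, starRingEnd_apply,
        star_trivial] using congrArg (InnerProductSpace.toDual ℝ _) hstat
    rw [← hfderiv]
    exact ((hFd xbar).hasFDerivAt.const_mul t).add
      (HasFDerivAt.fun_sum fun i _ ↦ (hgd i xbar).hasFDerivAt.const_mul (μ i))
  have hdual := le_of_isMinOn_lagrangian (f := fun y ↦ t * F y) hμ
    (hconv.isMinOn_of_hasFDerivAt_eq_zero (mem_univ xbar) hcrit) hx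
  have hgap : ∑ i, μ i * g i xbar = -m := by
    simp [μ, (hfeas _).ne]
  rw [hgap] at hdual
  rw [← sub_le_iff_le_add', le_div_iff₀ ht]
  linarith
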